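/- Invertibility of the map from persistence diagrams to persistence landscapes (Bubenik): if two finite persistence diagrams D = {(a_i, b_i)}_{i∈I} and D' = {(a'_j, b'_j)}_{j∈J} (finite multisets of pairs of reals with a_i < b_i and a'_j < b'_j) have the same persistence landscape, i.e. λ_k(t) = λ'_k(t) for every k ≥ 1 and every t ∈ ℝ, then D = D' as multisets of points of ℝ². -/

import Mathlib

/-- The tent function associated to an interval `(a, b)`:
`f_{(a,b)}(t) = max 0 (min (t - a) (b - t))`. -/
noncomputable def tent (a b t : ℝ) : ℝ := max 0 (min (t - a) (b - t))

/-- The `k`-th largest element of a finite multiset of reals (`k` is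
1-indexed), interpreted as `0` if `k` exceeds the cardinality. -/
noncomputable def kthLargest (s : Multiset ℝ) (k : ℕ) : ℝ :=
  (s.sort (· ≥ ·)).getD (k - 1) 0

/-- The `k`-th persistence landscape function of a finite persistence diagram
given as a multiset of points `(a, b)` of `ℝ²`. -/
noncomputable def landscape (D : Multiset (ℝ × ℝ)) (k : ℕ) (t : ℝ) : ℝ :=
  kthLargest (D.map fun p => tent p.1 p.2 t) k

lemma tent_le (a b t : ℝ) (hab : a ≤ b) : tent a b t ≤ (b - a) / 2 := by
  unfold tent
  have h1 := min_le_left (t - a) (b - t)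
  have h2 := min_le_right (t - a) (b - t)
  apply max_le <;> linarith

lemma tent_mid (a b : ℝ) (hab : a ≤ b) : tent a b ((a + b) / 2) = (b - a) / 2 := by
  unfold tent
  rw [show (a + b) / 2 - a = (b - a) / 2 by ring, show b - (a + b) / 2 = (b - a) / 2 by ring,
    min_self, max_eq_right (by linarith)]

/-- The multiset of positive tent values of a diagram at a point `t`. -/
noncomputable def posVals (D : Multiset (ℝ × ℝ)) (t : ℝ) : Multiset ℝ :=
  (D.map fun p => tent p.1 p.2 t).filter (fun x => 0 < x)

lemma mem_posVals {D : Multiset (ℝ × ℝ)} {t x : ℝ} :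
    x ∈ posVals D t ↔ (∃ p ∈ D, tent p.1 p.2 t = x) ∧ 0 < x := by
  simp [posVals, Multiset.mem_filter, Multiset.mem_map, and_comm]

lemma posVals_eq_zero {D : Multiset (ℝ × ℝ)} (hD : ∀ p ∈ D, p.1 < p.2)
    (h : ∀ t, posVals D t = 0) : D = 0 := by
  by_contra hne
  obtain ⟨q, hq⟩ := Multiset.exists_mem_of_ne_zero hne
  have hlt := hD q hq
  have hmem : (q.2 - q.1) / 2 ∈ posVals D ((q.1 + q.2) / 2) :=
    mem_posVals.mpr ⟨⟨q, hq, tent_mid _ _ hlt.le⟩, by linarith⟩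
  rw [h] at hmem
  simp at hmem

lemma filter_nil_of_getD (l : List ℝ) (h : ∀ n, l.getD n 0 = 0) :
    l.filter (fun x => decide (0 < x)) = [] := by
  induction l with
  | nil => rfl
  | cons a t ih =>
    have ha : a = (0 : ℝ) := by simpa using h 0
    have ht : ∀ n, t.getD n 0 = 0 := fun n => by simpa using h (n + 1)
    simp [List.filter_cons, ha, ih ht]

lemma filter_eq_of_getD (l : List ℝ) : ∀ l' : List ℝ, (∀ n, l.getD n 0 = l'.getD n 0) →
    l.filter (fun x => decide (0 < x)) = l'.filter (fun x => decide (0 < x)) := by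
  induction l with
  | nil =>
    intro l' h
    rw [List.filter_nil]
    exact (filter_nil_of_getD l' fun n => by simpa using (h n).symm).symm
  | cons a t ih =>
    intro l' h
    match l' with
    | [] => exact filter_nil_of_getD (a :: t) fun n => by simpa using h n
    | b :: t' =>
      have hab : a = b := by simpa using h 0
      have ht : ∀ n, t.getD n 0 = t'.getD n 0 := fun n => by simpa using h (n + 1)
      simp [List.filter_cons, hab, ih t' ht]

lemma posVals_eq_of_landscape {D D' : Multiset (ℝ × ℝ)}
    (h : ∀ k : ℕ, 1 ≤ k → ∀ t : ℝ, landscape D k t = landscape D' k t) (t : ℝ) :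
    posVals D t = posVals D' t := by
  set l := ((D.map fun p => tent p.1 p.2 t).sort (· ≥ ·)) with hl
  set l' := ((D'.map fun p => tent p.1 p.2 t).sort (· ≥ ·)) with hl'
  have hg : ∀ n, l.getD n 0 = l'.getD n 0 := by
    intro n
    have := h (n + 1) (by omega) t
    simpa [landscape, kthLargest, hl, hl'] using this
  have hf := filter_eq_of_getD l l' hg
  have e1 : posVals D t = ↑(l.filter (fun x => decide (0 < x))) := by
    rw [posVals, ← Multiset.sort_eq (D.map fun p => tent p.1 p.2 t) (· ≥ ·),
      Multiset.filter_coe]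
  have e2 : posVals D' t = ↑(l'.filter (fun x => decide (0 < x))) := by
    rw [posVals, ← Multiset.sort_eq (D'.map fun p => tent p.1 p.2 t) (· ≥ ·),
      Multiset.filter_coe]
  rw [e1, e2, hf]

lemma main_ind (n : ℕ) : ∀ D D' : Multiset (ℝ × ℝ), D.card ≤ n →
    (∀ p ∈ D, p.1 < p.2) → (∀ p ∈ D', p.1 < p.2) →
    (∀ t, posVals D t = posVals D' t) → D = D' := by
  induction n with
  | zero =>
    intro D D' hc hD hD' hp
    have hD0 : D = 0 := Multiset.card_eq_zero.mp (Nat.le_zero.mp hc)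
    subst hD0
    exact (posVals_eq_zero hD' fun t => by rw [← hp t]; simp [posVals]).symm
  | succ n ih =>
    intro D D' hc hD hD' hp
    by_cases hD0 : D = 0
    · subst hD0
      exact (posVals_eq_zero hD' fun t => by rw [← hp t]; simp [posVals]).symm
    · -- pick a longest interval p in D
      have hne : D.toFinset.Nonempty := by
        obtain ⟨q, hq⟩ := Multiset.exists_mem_of_ne_zero hD0
        exact ⟨q, Multiset.mem_toFinset.mpr hq⟩
      obtain ⟨p, hpF, hmax⟩ := Finset.exists_max_image D.toFinset (fun p => p.2 - p.1) hne
      have hpD : p ∈ D := Multiset.mem_toFinset.mp hpF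
      have hmax' : ∀ q ∈ D, q.2 - q.1 ≤ p.2 - p.1 := fun q hq =>
        hmax q (Multiset.mem_toFinset.mpr hq)
      have hplt := hD p hpD
      -- every interval of D' is no longer than p
      have hlen' : ∀ q ∈ D', q.2 - q.1 ≤ p.2 - p.1 := by
        intro q hq
        have hq2 := hD' q hq
        have hmem : (q.2 - q.1) / 2 ∈ posVals D' ((q.1 + q.2) / 2) :=
          mem_posVals.mpr ⟨⟨q, hq, tent_mid _ _ hq2.le⟩, by linarith⟩
        rw [← hp] at hmem
        obtain ⟨⟨r, hrD, hr⟩, -⟩ := mem_posVals.mp hmem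
        have h1 := tent_le r.1 r.2 ((q.1 + q.2) / 2) (hD r hrD).le
        have h2 := hmax' r hrD
        linarith
      -- p belongs to D'
      have hpD' : p ∈ D' := by
        have hv0 : 0 < (p.2 - p.1) / 2 := by linarith
        have hmem : (p.2 - p.1) / 2 ∈ posVals D ((p.1 + p.2) / 2) :=
          mem_posVals.mpr ⟨⟨p, hpD, tent_mid _ _ hplt.le⟩, hv0⟩
        rw [hp ((p.1 + p.2) / 2)] at hmem
        obtain ⟨⟨q, hq, hqt⟩, -⟩ := mem_posVals.mp hmem
        have hmin : min ((p.1 + p.2) / 2 - q.1) (q.2 - (p.1 + p.2) / 2) = (p.2 - p.1) / 2 := by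
          rcases max_choice 0 (min ((p.1 + p.2) / 2 - q.1) (q.2 - (p.1 + p.2) / 2)) with h0 | h0
          · exfalso; rw [tent, h0] at hqt; linarith
          · rw [tent, h0] at hqt; exact hqt
        have hx : (p.2 - p.1) / 2 ≤ (p.1 + p.2) / 2 - q.1 := hmin ▸ min_le_left _ _
        have hy : (p.2 - p.1) / 2 ≤ q.2 - (p.1 + p.2) / 2 := hmin ▸ min_le_right _ _
        have hlq := hlen' q hq
        have hq1 : q.1 = p.1 := by linarith
        have hq2 : q.2 = p.2 := by linarith
        have heq : q = p := Prod.ext hq1 hq2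
        rwa [heq] at hq
      -- strip off p and recurse
      have hkey : ∀ t, posVals (D.erase p) t = posVals (D'.erase p) t := by
        intro t
        have h1 : p ::ₘ D.erase p = D := Multiset.cons_erase hpD
        have h2 : p ::ₘ D'.erase p = D' := Multiset.cons_erase hpD'
        have := hp t
        rw [← h1, ← h2] at this
        simp only [posVals, Multiset.map_cons, Multiset.filter_cons] at this
        exact add_left_cancel this
      have hcard : (D.erase p).card ≤ n := by
        rw [Multiset.card_erase_of_mem hpD, Nat.pred_eq_sub_one]
        have : 0 < D.card := Multiset.card_pos.mpr hD0
        omega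
      have hE := ih (D.erase p) (D'.erase p) hcard
        (fun q hq => hD q (Multiset.mem_of_mem_erase hq))
        (fun q hq => hD' q (Multiset.mem_of_mem_erase hq)) hkey
      calc D = p ::ₘ D.erase p := (Multiset.cons_erase hpD).symm
        _ = p ::ₘ D'.erase p := by rw [hE]
        _ = D' := Multiset.cons_erase hpD'

/-- **Invertibility of the map from persistence diagrams to persistence
landscapes (Bubenik)**: two finite persistence diagrams with the same
persistence landscape are equal as multisets of points of `ℝ²`. -/
theorem landscape_injective (D D' : Multiset (ℝ × ℝ))
    (hD : ∀ p ∈ D, p.1 < p.2) (hD' : ∀ p ∈ D', p.1 < p.2)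
    (h : ∀ k : ℕ, 1 ≤ k → ∀ t : ℝ, landscape D k t = landscape D' k t) :
    D = D' := by
  exact main_ind D.card D D' le_rfl hD hD' (posVals_eq_of_landscape h)
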